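/- arXiv:2006.14364 — 2 statements merged into one kernel-verified Lean document; each statement's English description precedes it below -/
import Mathlib

section
/- Let C = Φᵀ Ξ Φ be invertible, A and b arbitrary of compatible dimensions, V ∈ ℝ^n, Π = Φ(ΦᵀΞΦ)⁻¹ΦᵀΞ the ξ-weighted projection onto the column space of Φ, and suppose Φᵀ Ξ (R + γPΦθ - Φθ) = b - Aθ for all θ (where V = R + γPV). Then for any θ with v̂ = Φθ: V - v̂ = (I - γΠP)⁻¹ [(V - ΠV) + Φ C⁻¹ (b - Aθ)], provided I - γΠP is invertible. -/
/-!
Write `T u = R + γ P u` for the Bellman operator, so that `V = T V`. The weighted projection `Π`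
fixes the column space of `Φ`, and `Φ C⁻¹ (b - Aθ)` is the projected Bellman residual
`Π (T(Φθ) - Φθ)`. Hence
`(V - ΠV) + Π (T(Φθ) - Φθ) = (V - Φθ) - Π (T V - T(Φθ)) = (I - γΠP)(V - Φθ)`,
and inverting `I - γΠP` gives the decomposition.
-/

open Matrix

namespace Matrix

variable {m k α : Type*} [Fintype m] [Fintype k] [CommRing α]

theorem mul_inv_mul_transpose_mul_mul_self [DecidableEq k] (Φ : Matrix m k α) (W : Matrix m m α)
    (h : IsUnit (Φᵀ * W * Φ).det) :
    Φ * (Φᵀ * W * Φ)⁻¹ * Φᵀ * W * Φ = Φ := by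
  calc Φ * (Φᵀ * W * Φ)⁻¹ * Φᵀ * W * Φ = Φ * ((Φᵀ * W * Φ)⁻¹ * (Φᵀ * W * Φ)) := by
        simp only [Matrix.mul_assoc]
    _ = Φ := by rw [nonsing_inv_mul _ h, Matrix.mul_one]

theorem transpose_mulVec_bellman_residual [DecidableEq m] (Φ : Matrix m k α) (W P : Matrix m m α)
    (R : m → α) (γ : α) (θ : k → α) :
    Φᵀ *ᵥ (W *ᵥ R) - (Φᵀ * W * (1 - γ • P) * Φ) *ᵥ θ
      = Φᵀ *ᵥ (W *ᵥ (R + γ • (P *ᵥ (Φ *ᵥ θ)) - Φ *ᵥ θ)) := by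
  simp only [Matrix.mul_sub, Matrix.sub_mul, sub_mulVec, Matrix.one_mul, Matrix.mul_smul,
    Matrix.smul_mul, smul_mulVec, mulVec_sub, mulVec_add, mulVec_smul, mulVec_mulVec,
    Matrix.mul_assoc]
  abel

theorem one_sub_smul_mul_mulVec_sub_of_bellman [DecidableEq m] (Pi P : Matrix m m α)
    (R V u : m → α) (γ : α) (hV : V = R + γ • (P *ᵥ V)) (hu : Pi *ᵥ u = u) :
    (1 - γ • (Pi * P)) *ᵥ (V - u)
      = (V - Pi *ᵥ V) + Pi *ᵥ (R + γ • (P *ᵥ u) - u) := by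
  have hPiV : Pi *ᵥ V = Pi *ᵥ R + γ • (Pi *ᵥ (P *ᵥ V)) := by
    conv_lhs => rw [hV]
    rw [mulVec_add, mulVec_smul]
  simp only [sub_mulVec, one_mulVec, smul_mulVec, ← mulVec_mulVec, mulVec_sub, mulVec_add,
    mulVec_smul, hu, hPiV]
  abel

end Matrix

theorem value_error_decomposition_general {n d : ℕ}
    (Φ : Matrix (Fin n) (Fin d) ℝ) (ξ : Fin n → ℝ)
    (P : Matrix (Fin n) (Fin n) ℝ) (R V : Fin n → ℝ) (γ : ℝ)
    (C : Matrix (Fin d) (Fin d) ℝ) (hC : C = Φᵀ * Matrix.diagonal ξ * Φ)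
    (hCinv : IsUnit C.det)
    (Pi : Matrix (Fin n) (Fin n) ℝ) (hPi : Pi = Φ * C⁻¹ * Φᵀ * Matrix.diagonal ξ)
    (A : Matrix (Fin d) (Fin d) ℝ)
    (hA : A = Φᵀ * Matrix.diagonal ξ * (1 - γ • P) * Φ)
    (b : Fin d → ℝ) (hb : b = Φᵀ *ᵥ (Matrix.diagonal ξ *ᵥ R))
    (hBellman : V = R + γ • (P *ᵥ V))
    (hinv : IsUnit (1 - γ • (Pi * P)).det) :
    ∀ θ : Fin d → ℝ,
      V - Φ *ᵥ θ =
        (1 - γ • (Pi * P))⁻¹ *ᵥ ((V - Pi *ᵥ V) + Φ *ᵥ (C⁻¹ *ᵥ (b - A *ᵥ θ))) := by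
  intro θ
  have hfix : Pi *ᵥ (Φ *ᵥ θ) = Φ *ᵥ θ := by
    rw [mulVec_mulVec, hPi, hC, mul_inv_mul_transpose_mul_mul_self _ _ (hC ▸ hCinv)]
  have hresidual : Φ *ᵥ (C⁻¹ *ᵥ (b - A *ᵥ θ)) = Pi *ᵥ (R + γ • (P *ᵥ (Φ *ᵥ θ)) - Φ *ᵥ θ) := by
    rw [hb, hA, transpose_mulVec_bellman_residual, hPi]
    simp only [mulVec_mulVec, Matrix.mul_assoc]
  rw [hresidual, ← one_sub_smul_mul_mulVec_sub_of_bellman Pi P R V _ γ hBellman hfix,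
    mulVec_mulVec, nonsing_inv_mul _ hinv, one_mulVec]

/-- Value error decomposition:
`V - Φθ = (I - γΠP)⁻¹ [(V - ΠV) + Φ C⁻¹ (b - Aθ)]`. -/
theorem value_error_decomposition {n d : ℕ}
    (Φ : Matrix (Fin n) (Fin d) ℝ) (ξ : Fin n → ℝ) (hξ : ∀ s, 0 < ξ s)
    (P : Matrix (Fin n) (Fin n) ℝ) (R V : Fin n → ℝ) (γ : ℝ)
    (hγ0 : 0 ≤ γ) (hγ1 : γ < 1)
    (C : Matrix (Fin d) (Fin d) ℝ) (hC : C = Φᵀ * Matrix.diagonal ξ * Φ)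
    (hCinv : IsUnit C.det)
    (Pi : Matrix (Fin n) (Fin n) ℝ) (hPi : Pi = Φ * C⁻¹ * Φᵀ * Matrix.diagonal ξ)
    (A : Matrix (Fin d) (Fin d) ℝ)
    (hA : A = Φᵀ * Matrix.diagonal ξ * (1 - γ • P) * Φ)
    (b : Fin d → ℝ) (hb : b = Φᵀ *ᵥ (Matrix.diagonal ξ *ᵥ R))
    (hBellman : V = R + γ • (P *ᵥ V))
    (hinv : IsUnit (1 - γ • (Pi * P)).det) :
    ∀ θ : Fin d → ℝ,
      V - Φ *ᵥ θ =
        (1 - γ • (Pi * P))⁻¹ *ᵥ ((V - Pi *ᵥ V) + Φ *ᵥ (C⁻¹ *ᵥ (b - A *ᵥ θ))) :=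
  value_error_decomposition_general Φ ξ P R V γ C hC hCinv Pi hPi A hA b hb hBellman hinv
end

section
/- Let Φ be an n×d matrix, Ξ an n×n diagonal positive definite matrix, P an n×n matrix, and suppose the block matrix [[ΦᵀΞΦ, ΦᵀΞPΦ],[ΦᵀPᵀΞΦ, ΦᵀΞΦ]] is positive semidefinite. Then for any θ ∈ ℝ^d, ‖ΠPΦθ‖_ξ ≤ ‖Φθ‖_ξ, where Π = Φ(ΦᵀΞΦ)⁻¹ΦᵀΞ is the ξ-weighted projection (assuming ΦᵀΞΦ invertible) and ‖v‖_ξ = √(vᵀΞv). -/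
/-!
With `C = ΦᵀΞΦ` and `B = ΦᵀΞPΦ`, one has `ΠPΦθ = Φ C⁻¹ B θ`, so `‖ΠPΦθ‖²_ξ = θᵀ BᵀC⁻¹B θ`
while `‖Φθ‖²_ξ = θᵀ C θ`. The block hypothesis makes `C` positive semidefinite, hence positive
definite as it is invertible, and then its Schur complement `C - BᵀC⁻¹B` is positive semidefinite.
-/

open Matrix

namespace Matrix

variable {m n : Type*} [Fintype m] [Fintype n]

theorem mulVec_dotProduct_mulVec_mulVec {R : Type*} [CommSemiring R] (A : Matrix n m R)
    (W : Matrix n n R) (x : m → R) :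
    (A *ᵥ x) ⬝ᵥ (W *ᵥ (A *ᵥ x)) = x ⬝ᵥ ((Aᵀ * W * A) *ᵥ x) := by
  rw [← mulVec_mulVec, ← mulVec_mulVec, dotProduct_mulVec x, vecMul_transpose]

variable [DecidableEq m]

theorem weightedProjection_mulVec_dotProduct {R : Type*} [CommRing R] (Φ : Matrix n m R)
    (W : Matrix n n R) (hC : IsUnit (Φᵀ * W * Φ).det) (v : n → R) :
    ((Φ * (Φᵀ * W * Φ)⁻¹ * Φᵀ * W) *ᵥ v) ⬝ᵥ (W *ᵥ ((Φ * (Φᵀ * W * Φ)⁻¹ * Φᵀ * W) *ᵥ v)) =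
      ((Φᵀ * W) *ᵥ v) ⬝ᵥ ((Φᵀ * W * Φ)⁻¹ *ᵥ ((Φᵀ * W) *ᵥ v)) := by
  have hproj : (Φ * (Φᵀ * W * Φ)⁻¹ * Φᵀ * W) *ᵥ v =
      Φ *ᵥ ((Φᵀ * W * Φ)⁻¹ *ᵥ ((Φᵀ * W) *ᵥ v)) := by
    simp only [mulVec_mulVec, Matrix.mul_assoc]
  rw [hproj, mulVec_dotProduct_mulVec_mulVec, mulVec_mulVec _ (Φᵀ * W * Φ),
    mul_nonsing_inv _ hC, one_mulVec, dotProduct_comm]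

theorem PosSemidef.fromBlocks_dotProduct_mulVec_le {A : Matrix m m ℝ} {B : Matrix m n ℝ}
    {D : Matrix n n ℝ} (h : (fromBlocks A B Bᵀ D).PosSemidef) (hA : IsUnit A.det) (x : n → ℝ) :
    x ⬝ᵥ ((Bᵀ * A⁻¹ * B) *ᵥ x) ≤ x ⬝ᵥ (D *ᵥ x) := by
  have hApd : A.PosDef :=
    (h.submatrix (Sum.inl : m → m ⊕ n)).posDef_iff_isUnit.mpr ((isUnit_iff_isUnit_det A).mpr hA)
  have := A.invertibleOfIsUnitDet hA
  have hschur := ((hApd.fromBlocks₁₁ B D).mp h).dotProduct_mulVec_nonneg x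
  simpa only [star_trivial, conjTranspose_eq_transpose_of_trivial, sub_mulVec, dotProduct_sub,
    sub_nonneg] using hschur

end Matrix

theorem block_psd_nonexpansive_general {n d : ℕ}
    (Φ : Matrix (Fin n) (Fin d) ℝ) (ξ : Fin n → ℝ)
    (P : Matrix (Fin n) (Fin n) ℝ)
    (hCinv : IsUnit (Φᵀ * Matrix.diagonal ξ * Φ).det)
    (hblock : (Matrix.fromBlocks
        (Φᵀ * Matrix.diagonal ξ * Φ) (Φᵀ * Matrix.diagonal ξ * P * Φ)
        (Φᵀ * Pᵀ * Matrix.diagonal ξ * Φ) (Φᵀ * Matrix.diagonal ξ * Φ)).PosSemidef)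
    (Pi : Matrix (Fin n) (Fin n) ℝ)
    (hPi : Pi = Φ * (Φᵀ * Matrix.diagonal ξ * Φ)⁻¹ * Φᵀ * Matrix.diagonal ξ) :
    ∀ θ : Fin d → ℝ,
      Real.sqrt ((Pi *ᵥ (P *ᵥ (Φ *ᵥ θ))) ⬝ᵥ
          (Matrix.diagonal ξ *ᵥ (Pi *ᵥ (P *ᵥ (Φ *ᵥ θ))))) ≤
        Real.sqrt ((Φ *ᵥ θ) ⬝ᵥ (Matrix.diagonal ξ *ᵥ (Φ *ᵥ θ))) := by
  intro θ
  have hlower : Φᵀ * Pᵀ * diagonal ξ * Φ = (Φᵀ * diagonal ξ * P * Φ)ᵀ := by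
    simp only [transpose_mul, diagonal_transpose, transpose_transpose, Matrix.mul_assoc]
  rw [hlower] at hblock
  have hB : (Φᵀ * diagonal ξ) *ᵥ (P *ᵥ (Φ *ᵥ θ)) = (Φᵀ * diagonal ξ * P * Φ) *ᵥ θ := by
    simp only [mulVec_mulVec, Matrix.mul_assoc]
  apply Real.sqrt_le_sqrt
  rw [hPi, weightedProjection_mulVec_dotProduct Φ _ hCinv, hB, mulVec_dotProduct_mulVec_mulVec,
    mulVec_dotProduct_mulVec_mulVec]
  exact hblock.fromBlocks_dotProduct_mulVec_le hCinv θ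

/-- If the block matrix `[[ΦᵀΞΦ, ΦᵀΞPΦ],[ΦᵀPᵀΞΦ, ΦᵀΞΦ]]` is PSD then
`‖ΠPΦθ‖_ξ ≤ ‖Φθ‖_ξ` for all `θ`. -/
theorem block_psd_nonexpansive {n d : ℕ}
    (Φ : Matrix (Fin n) (Fin d) ℝ) (ξ : Fin n → ℝ) (hξ : ∀ s, 0 < ξ s)
    (P : Matrix (Fin n) (Fin n) ℝ)
    (hCinv : IsUnit (Φᵀ * Matrix.diagonal ξ * Φ).det)
    (hblock : (Matrix.fromBlocks
        (Φᵀ * Matrix.diagonal ξ * Φ) (Φᵀ * Matrix.diagonal ξ * P * Φ)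
        (Φᵀ * Pᵀ * Matrix.diagonal ξ * Φ) (Φᵀ * Matrix.diagonal ξ * Φ)).PosSemidef)
    (Pi : Matrix (Fin n) (Fin n) ℝ)
    (hPi : Pi = Φ * (Φᵀ * Matrix.diagonal ξ * Φ)⁻¹ * Φᵀ * Matrix.diagonal ξ) :
    ∀ θ : Fin d → ℝ,
      Real.sqrt ((Pi *ᵥ (P *ᵥ (Φ *ᵥ θ))) ⬝ᵥ
          (Matrix.diagonal ξ *ᵥ (Pi *ᵥ (P *ᵥ (Φ *ᵥ θ))))) ≤
        Real.sqrt ((Φ *ᵥ θ) ⬝ᵥ (Matrix.diagonal ξ *ᵥ (Φ *ᵥ θ))) :=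
  block_psd_nonexpansive_general Φ ξ P hCinv hblock Pi hPi
end
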